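/- arXiv:2602.04551 — 6 statements merged into one kernel-verified Lean document; each statement's English description precedes it below -/
import Mathlib

section
/- Weak duality for the node relaxation: for every r ∈ ℝⁿ and every β in the primal feasible set C (i.e., ‖β‖∞ ≤ M and β_i = 0 for all i ∈ F0), one has D(r) ≤ P(β). -/
open Matrix Finset Classical

noncomputable section
open scoped Classical

/-- The function `h` from the dual of the node relaxation. -/
noncomputable def hfun (lam0 lam2 M x : ℝ) : ℝ :=
  if x ≤ 2 * M * lam2 then x ^ 2 / (4 * lam2) - lam0 else M * x - lam0 - lam2 * M ^ 2

/-- The per-coordinate penalty `ψ_i` of the node relaxation. -/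
noncomputable def psi {p : ℕ} (lam0 lam2 M : ℝ) (F0 F1 : Set (Fin p)) (i : Fin p)
    (t : ℝ) : ℝ :=
  if i ∈ F0 then 0
  else if i ∈ F1 then lam0 + lam2 * t ^ 2
  else if Real.sqrt (lam0 / lam2) ≤ M then
    (if |t| ≤ Real.sqrt (lam0 / lam2) then 2 * Real.sqrt (lam0 * lam2) * |t|
     else lam0 + lam2 * t ^ 2)
  else (lam0 / M + lam2 * M) * |t|

/-- The per-coordinate dual penalty `ν_i`. -/
noncomputable def nufun {p : ℕ} (lam0 lam2 M : ℝ) (F0 F1 : Set (Fin p)) (i : Fin p)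
    (x : ℝ) : ℝ :=
  if i ∈ F0 then 0
  else if i ∈ F1 then hfun lam0 lam2 M x
  else if Real.sqrt (lam0 / lam2) ≤ M then max (hfun lam0 lam2 M x) 0
  else max (M * x - lam0 - lam2 * M ^ 2) 0

/-- The primal feasible set
`C = {β : ‖β‖_∞ ≤ M and β_i = 0 for all i ∈ F0}`. -/
def feasC {p : ℕ} (M : ℝ) (F0 : Set (Fin p)) : Set (Fin p → ℝ) :=
  {β | (∀ i, |β i| ≤ M) ∧ ∀ i ∈ F0, β i = 0}

/-- The primal objective `P(β) = (1/2)‖y − Xβ‖₂² + Σ_i ψ_i(β_i)`. -/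
noncomputable def primalP {n p : ℕ} (X : Matrix (Fin n) (Fin p) ℝ) (y : Fin n → ℝ)
    (lam0 lam2 M : ℝ) (F0 F1 : Set (Fin p)) (β : Fin p → ℝ) : ℝ :=
  (1 / 2) * ∑ j, (y j - ∑ i, X j i * β i) ^ 2 + ∑ i, psi lam0 lam2 M F0 F1 i (β i)

/-- The dual objective `D(r) = −(1/2)‖r‖₂² + ⟨y, r⟩ − Σ_i ν_i(|X_iᵀ r|)`. -/
noncomputable def dualD {n p : ℕ} (X : Matrix (Fin n) (Fin p) ℝ) (y : Fin n → ℝ)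
    (lam0 lam2 M : ℝ) (F0 F1 : Set (Fin p)) (r : Fin n → ℝ) : ℝ :=
  -(1 / 2) * ∑ j, r j ^ 2 + ∑ j, y j * r j
    - ∑ i, nufun lam0 lam2 M F0 F1 i |∑ j, X j i * r j|

lemma quad_bound (lam2 a x : ℝ) (hlam2 : 0 < lam2) :
    a * x - lam2 * a ^ 2 ≤ x ^ 2 / (4 * lam2) := by
  rw [le_div_iff₀ (by linarith : (0:ℝ) < 4 * lam2)]
  nlinarith [sq_nonneg (2 * lam2 * a - x)]

lemma hfun_bound (lam0 lam2 M t x : ℝ) (hlam2 : 0 < lam2) (ht : |t| ≤ M) :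
    |t| * x ≤ lam0 + lam2 * t ^ 2 + hfun lam0 lam2 M x := by
  unfold hfun
  by_cases hxc : x ≤ 2 * M * lam2
  · simp only [hxc, if_true]
    have h1 := quad_bound lam2 |t| x hlam2
    rw [sq_abs] at h1
    linarith
  · simp only [hxc, if_false]
    push_neg at hxc
    have ha := abs_nonneg t
    have h1 : 0 ≤ (M - |t|) * (x - lam2 * (|t| + M)) := by
      apply mul_nonneg (by linarith)
      nlinarith [mul_le_mul_of_nonneg_left ht hlam2.le]
    nlinarith [sq_abs t]

lemma key_ineq (lam0 lam2 M : ℝ) (hlam0 : 0 ≤ lam0) (hlam2 : 0 < lam2) (hM : 0 < M)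
    {p : ℕ} (F0 F1 : Set (Fin p)) (i : Fin p) (t x : ℝ) (hx : 0 ≤ x) (ht : |t| ≤ M)
    (ht0 : i ∈ F0 → t = 0) :
    |t| * x ≤ psi lam0 lam2 M F0 F1 i t + nufun lam0 lam2 M F0 F1 i x := by
  have ha := abs_nonneg t
  unfold psi nufun
  by_cases h0 : i ∈ F0
  · simp [h0, ht0 h0]
  by_cases h1 : i ∈ F1
  · simp only [h0, h1, if_false, if_true]
    exact hfun_bound lam0 lam2 M t x hlam2 ht
  simp only [h0, h1, if_false]
  set s := Real.sqrt (lam0 / lam2) with hs_def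
  have hs : 0 ≤ s := Real.sqrt_nonneg _
  have hs2 : lam2 * s ^ 2 = lam0 := by
    rw [hs_def, Real.sq_sqrt (div_nonneg hlam0 hlam2.le)]
    field_simp
  by_cases hsM : s ≤ M
  · simp only [hsM, if_true]
    have hsqm : Real.sqrt (lam0 * lam2) = lam2 * s := by
      have : lam0 * lam2 = (lam2 * s) ^ 2 := by nlinarith
      rw [this, Real.sqrt_sq (by positivity)]
    by_cases hts : |t| ≤ s
    · simp only [hts, if_true, hsqm]
      by_cases hxs : x ≤ 2 * lam2 * s
      · have : |t| * x ≤ 2 * (lam2 * s) * |t| :=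
          by nlinarith [mul_le_mul_of_nonneg_left hxs ha]
        have := le_max_right (hfun lam0 lam2 M x) 0
        linarith
      · push_neg at hxs
        have hhx : s * (x - 2 * lam2 * s) ≤ hfun lam0 lam2 M x := by
          unfold hfun
          by_cases hxc : x ≤ 2 * M * lam2
          · simp only [hxc, if_true]
            have := quad_bound lam2 s x hlam2
            linarith
          · simp only [hxc, if_false]
            push_neg at hxc
            have h2 : 0 ≤ (M - s) * (x - lam2 * (s + M)) := by
              apply mul_nonneg (by linarith)
              nlinarith [mul_le_mul_of_nonneg_left hsM hlam2.le]
            nlinarith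
        have h3 : |t| * (x - 2 * lam2 * s) ≤ s * (x - 2 * lam2 * s) :=
          mul_le_mul_of_nonneg_right hts (by linarith)
        have := le_max_left (hfun lam0 lam2 M x) 0
        nlinarith
    · simp only [hts, if_false]
      have := hfun_bound lam0 lam2 M t x hlam2 ht
      have := le_max_left (hfun lam0 lam2 M x) 0
      linarith
  · simp only [hsM, if_false]
    have hMc : M * (lam0 / M + lam2 * M) = lam0 + lam2 * M ^ 2 := by
      field_simp
    by_cases hxc : x ≤ lam0 / M + lam2 * M
    · have h2 : |t| * x ≤ (lam0 / M + lam2 * M) * |t| := by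
        nlinarith [mul_le_mul_of_nonneg_left hxc ha]
      have := le_max_right (M * x - lam0 - lam2 * M ^ 2) (0:ℝ)
      linarith
    · push_neg at hxc
      have h2 : 0 ≤ (M - |t|) * (x - (lam0 / M + lam2 * M)) :=
        mul_nonneg (by linarith) (by linarith)
      have := le_max_left (M * x - lam0 - lam2 * M ^ 2) (0:ℝ)
      nlinarith

/-- Weak duality for the node relaxation: for every `r ∈ ℝⁿ` and every `β` in the
primal feasible set `C`, one has `D(r) ≤ P(β)`. -/
theorem weak_duality_node_relaxation {n p : ℕ} (X : Matrix (Fin n) (Fin p) ℝ)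
    (y : Fin n → ℝ) (lam0 lam2 M : ℝ) (hlam0 : 0 ≤ lam0) (hlam2 : 0 < lam2) (hM : 0 < M)
    (F0 F1 : Set (Fin p)) (hdisj : Disjoint F0 F1)
    (r : Fin n → ℝ) (β : Fin p → ℝ) (hβ : β ∈ feasC M F0) :
    dualD X y lam0 lam2 M F0 F1 r ≤ primalP X y lam0 lam2 M F0 F1 β := by
  obtain ⟨hβM, hβ0⟩ := hβ
  -- per-coordinate inequality
  have hcoord : ∀ i : Fin p, β i * (∑ j, X j i * r j) ≤
      psi lam0 lam2 M F0 F1 i (β i) + nufun lam0 lam2 M F0 F1 i |∑ j, X j i * r j| := by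
    intro i
    have h1 : β i * (∑ j, X j i * r j) ≤ |β i| * |∑ j, X j i * r j| := by
      calc β i * (∑ j, X j i * r j) ≤ |β i * (∑ j, X j i * r j)| := le_abs_self _
        _ = |β i| * |∑ j, X j i * r j| := abs_mul _ _
    exact h1.trans (key_ineq lam0 lam2 M hlam0 hlam2 hM F0 F1 i (β i) _
      (abs_nonneg _) (hβM i) (fun h => hβ0 i h))
  have hsum : ∑ i, β i * (∑ j, X j i * r j) ≤
      ∑ i, psi lam0 lam2 M F0 F1 i (β i) +
      ∑ i, nufun lam0 lam2 M F0 F1 i |∑ j, X j i * r j| := by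
    rw [← Finset.sum_add_distrib]
    exact Finset.sum_le_sum fun i _ => hcoord i
  -- quadratic part
  have hquad : ∑ j, (y j * r j - (1/2) * (r j) ^ 2) ≤
      ∑ j, ((1/2) * (y j - ∑ i, X j i * β i) ^ 2 + (∑ i, X j i * β i) * r j) :=
    Finset.sum_le_sum fun j _ => by nlinarith [sq_nonneg (y j - (∑ i, X j i * β i) - r j)]
  rw [Finset.sum_sub_distrib, Finset.sum_add_distrib, ← Finset.mul_sum, ← Finset.mul_sum]
    at hquad
  have hswap : ∑ j, (∑ i, X j i * β i) * r j = ∑ i, β i * (∑ j, X j i * r j) := by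
    simp_rw [Finset.sum_mul, Finset.mul_sum]
    rw [Finset.sum_comm]
    congr 1; ext i; congr 1; ext j; ring
  rw [hswap] at hquad
  unfold dualD primalP
  linarith
end
end

section
/- Strong duality for the node relaxation: the infimum of P(β) over β in the primal feasible set C equals the supremum of D(r) over r ∈ ℝⁿ. -/
/-!
The primal is a least-squares loss plus a separable penalty over the box `C = ∏ Cᵢ`, and
`x ↦ νᵢ(|x|)` is the convex conjugate of `ψᵢ` restricted to `Cᵢ`. For any `β ∈ C` and `r`,
the gap `P(β) - D(r)` is `½‖y - Xβ - r‖²` plus a sum of Fenchel–Young gaps, which gives weak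
duality. A minimiser `β` of `P` on the compact set `C` exists, and since every `ψᵢ` is
convex, optimality of `β` along the `i`-th coordinate says exactly that `βᵢ` attains the
conjugate of `ψᵢ` at `Xᵢᵀ(y - Xβ)`. So the gap vanishes at `r = y - Xβ`: the minimum of `P`
is the maximum of `D`.
-/

open Matrix Finset Classical

noncomputable section
open scoped Classical

open Filter Topology

lemma le_of_forall_le_add_mul {a b c : ℝ} (h : ∀ s : ℝ, 0 < s → s ≤ 1 → a ≤ b + s * c) :
    a ≤ b := by
  have hlim : Tendsto (fun s => b + s * c) (𝓝[>] 0) (𝓝 b) := by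
    have : Continuous fun s : ℝ => b + s * c := by fun_prop
    simpa using (this.tendsto 0).mono_left nhdsWithin_le_nhds
  refine ge_of_tendsto hlim ?_
  filter_upwards [Ioc_mem_nhdsGT one_pos] with s hs using h s hs.1 hs.2

lemma sum_apply_update {ι R : Type*} [Fintype ι] [DecidableEq ι] [AddCommGroup R]
    (f : ι → R → R) (β : ι → R) (i : ι) (v : R) :
    ∑ k, f k (Function.update β i v k) = ∑ k, f k (β k) + (f i v - f i (β i)) := by
  simp only [Function.apply_update f, Finset.sum_update_of_mem (Finset.mem_univ i),
    Finset.sum_eq_add_sum_sdiff_singleton_of_mem (Finset.mem_univ i) fun k => f k (β k)]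
  abel

lemma isGreatest_of_mem_of_le {α : Type*} [PartialOrder α] {s : Set α} {a b : α} (ha : a ∈ s)
    (hb : b ∈ upperBounds s) (hba : b ≤ a) : IsGreatest s b :=
  ⟨le_antisymm (hb ha) hba ▸ ha, hb⟩

lemma mul_le_max_mul_zero {u M : ℝ} (hu : u ∈ Set.Icc 0 M) (a : ℝ) : u * a ≤ max (M * a) 0 := by
  rcases le_total 0 a with ha | ha
  · exact le_max_of_le_left (mul_le_mul_of_nonneg_right hu.2 ha)
  · exact le_max_of_le_right (mul_nonpos_of_nonneg_of_nonpos hu.1 ha)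

lemma isGreatest_image_Icc_of_even {φ φ' : ℝ → ℝ} (heven : ∀ t, φ (-t) = φ t) {M : ℝ}
    (h : ∀ z, 0 ≤ z → IsGreatest ((fun u => z * u - φ u) '' Set.Icc 0 M) (φ' z)) (x : ℝ) :
    IsGreatest ((fun t => x * t - φ t) '' Set.Icc (-M) M) (φ' |x|) := by
  obtain ⟨⟨u, hu, hval⟩, hub⟩ := h |x| (abs_nonneg x)
  refine ⟨?_, ?_⟩
  · rcases le_total 0 x with hx | hx
    · refine ⟨u, ⟨by linarith [hu.1, hu.2], hu.2⟩, ?_⟩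
      rw [← hval, abs_of_nonneg hx]
    · refine ⟨-u, ⟨neg_le_neg hu.2, by linarith [hu.1, hu.2]⟩, ?_⟩
      rw [← hval, abs_of_nonpos hx]
      simp only [heven]
      ring
  · rintro _ ⟨t, ht, rfl⟩
    have hφ : φ |t| = φ t := by rcases abs_choice t with habs | habs <;> simp only [habs, heven]
    calc x * t - φ t ≤ |x| * |t| - φ |t| := by
          rw [hφ, ← abs_mul]
          linarith [le_abs_self (x * t)]
      _ ≤ φ' |x| := hub ⟨|t|, ⟨abs_nonneg t, abs_le.2 ht⟩, rfl⟩

lemma isGreatest_mul_sub_mul_abs {M : ℝ} (hM : 0 ≤ M) (z c : ℝ) :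
    IsGreatest ((fun u => z * u - c * |u|) '' Set.Icc 0 M) (max (M * (z - c)) 0) := by
  have hub : max (M * (z - c)) 0 ∈ upperBounds ((fun u => z * u - c * |u|) '' Set.Icc 0 M) := by
    rintro _ ⟨u, hu, rfl⟩
    calc z * u - c * |u| = u * (z - c) := by rw [abs_of_nonneg hu.1]; ring
      _ ≤ max (M * (z - c)) 0 := mul_le_max_mul_zero hu _
  rcases le_total (M * (z - c)) 0 with hneg | hpos
  · refine isGreatest_of_mem_of_le (Set.mem_image_of_mem _ (Set.left_mem_Icc.2 hM)) hub ?_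
    simp [hneg]
  · refine isGreatest_of_mem_of_le (Set.mem_image_of_mem _ (Set.right_mem_Icc.2 hM)) hub ?_
    rw [max_eq_left hpos, abs_of_nonneg hM]
    linarith

lemma sqrt_mul_eq_mul_sqrt_div (a : ℝ) {b : ℝ} (hb : 0 < b) : √(a * b) = b * √(a / b) := by
  rw [show a * b = b ^ 2 * (a / b) by field_simp, Real.sqrt_mul (by positivity),
    Real.sqrt_sq hb.le]

lemma mul_sqrt_div_sq {a b : ℝ} (ha : 0 ≤ a) (hb : 0 < b) : b * √(a / b) ^ 2 = a := by
  rw [Real.sq_sqrt (by positivity)]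
  field_simp

section SeparableLeastSquares

variable {n p : ℕ} (X : Matrix (Fin n) (Fin p) ℝ) (y : Fin n → ℝ)

def lsqPrimal (g : Fin p → ℝ → ℝ) (β : Fin p → ℝ) : ℝ :=
  (1 / 2) * ∑ j, (y j - ∑ i, X j i * β i) ^ 2 + ∑ i, g i (β i)

def lsqDual (g' : Fin p → ℝ → ℝ) (r : Fin n → ℝ) : ℝ :=
  -(1 / 2) * ∑ j, r j ^ 2 + ∑ j, y j * r j - ∑ i, g' i (∑ j, X j i * r j)

lemma lsqPrimal_sub_lsqDual (g g' : Fin p → ℝ → ℝ) (β : Fin p → ℝ) (r : Fin n → ℝ) :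
    lsqPrimal X y g β - lsqDual X y g' r =
      (1 / 2) * ∑ j, (y j - ∑ i, X j i * β i - r j) ^ 2 +
        ∑ i, (g i (β i) + g' i (∑ j, X j i * r j) - (∑ j, X j i * r j) * β i) := by
  have hcross : ∑ i, (∑ j, X j i * r j) * β i = ∑ j, (∑ i, X j i * β i) * r j := by
    simp only [Finset.sum_mul]
    rw [Finset.sum_comm]
    exact Finset.sum_congr rfl fun j _ => Finset.sum_congr rfl fun i _ => by ring
  have hsq : ∑ j, (y j - ∑ i, X j i * β i - r j) ^ 2 = ∑ j, (y j - ∑ i, X j i * β i) ^ 2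
      - 2 * ∑ j, y j * r j + 2 * ∑ j, (∑ i, X j i * β i) * r j + ∑ j, r j ^ 2 := by
    simp only [Finset.mul_sum, ← Finset.sum_sub_distrib, ← Finset.sum_add_distrib]
    exact Finset.sum_congr rfl fun j _ => by ring
  simp only [lsqPrimal, lsqDual, Finset.sum_sub_distrib, Finset.sum_add_distrib, hcross, hsq]
  ring

lemma lsqPrimal_update (g : Fin p → ℝ → ℝ) (β : Fin p → ℝ) (i : Fin p) (d : ℝ) :
    lsqPrimal X y g (Function.update β i (β i + d)) = lsqPrimal X y g β
      - d * ∑ j, X j i * (y j - ∑ k, X j k * β k) + d ^ 2 / 2 * ∑ j, X j i ^ 2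
      + (g i (β i + d) - g i (β i)) := by
  have hsq : ∀ j, (y j - ∑ k, X j k * Function.update β i (β i + d) k) ^ 2
      = (y j - ∑ k, X j k * β k) ^ 2 - 2 * d * (X j i * (y j - ∑ k, X j k * β k))
        + d ^ 2 * X j i ^ 2 := fun j => by
    rw [sum_apply_update (fun k b => X j k * b)]
    ring
  simp only [lsqPrimal, hsq, sum_apply_update g, Finset.sum_add_distrib, Finset.sum_sub_distrib,
    ← Finset.mul_sum]
  ring

variable {X y} {S : Fin p → Set ℝ} {g : Fin p → ℝ → ℝ}

lemma continuousOn_lsqPrimal (hg : ∀ i, ContinuousOn (g i) (S i)) :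
    ContinuousOn (lsqPrimal X y g) (Set.univ.pi S) := by
  refine (Continuous.continuousOn (by fun_prop)).add
    (continuousOn_finsetSum _ fun i _ => (hg i).comp (continuous_apply i).continuousOn ?_)
  exact fun β hβ => hβ i (Set.mem_univ i)

lemma lsqDual_le_lsqPrimal {g' : Fin p → ℝ → ℝ}
    (hg' : ∀ i x, g' i x ∈ upperBounds ((fun t => x * t - g i t) '' S i))
    {β : Fin p → ℝ} (hβ : β ∈ Set.univ.pi S) (r : Fin n → ℝ) :
    lsqDual X y g' r ≤ lsqPrimal X y g β := by
  rw [← sub_nonneg, lsqPrimal_sub_lsqDual]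
  refine add_nonneg (by positivity) (Finset.sum_nonneg fun i _ => ?_)
  have := hg' i (∑ j, X j i * r j) (Set.mem_image_of_mem _ (hβ i (Set.mem_univ i)))
  linarith

lemma mul_sub_le_of_isMinOn_lsqPrimal (hg : ∀ i, ConvexOn ℝ (S i) (g i)) {β : Fin p → ℝ}
    (hβ : β ∈ Set.univ.pi S) (hmin : IsMinOn (lsqPrimal X y g) (Set.univ.pi S) β) (i : Fin p)
    {t : ℝ} (ht : t ∈ S i) :
    (∑ j, X j i * (y j - ∑ k, X j k * β k)) * t - g i t
      ≤ (∑ j, X j i * (y j - ∑ k, X j k * β k)) * β i - g i (β i) := by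
  set x := ∑ j, X j i * (y j - ∑ k, X j k * β k)
  have hβi : β i ∈ S i := hβ i (Set.mem_univ i)
  suffices ∀ s : ℝ, 0 < s → s ≤ 1 →
      x * (t - β i) - (g i t - g i (β i)) ≤ 0 + s * ((t - β i) ^ 2 / 2 * ∑ j, X j i ^ 2) by
    linarith [le_of_forall_le_add_mul this]
  -- Moving `β i` the fraction `s` towards `t` changes the loss by `-s x (t - β i) + O(s²)`
  -- and, by convexity, the penalty by at most `s (g i t - g i (β i))`.
  intro s hs0 hs1
  have hmem : β i + s * (t - β i) ∈ S i := (hg i).1.add_smul_sub_mem hβi ht ⟨hs0.le, hs1⟩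
  have hupd : Function.update β i (β i + s * (t - β i)) ∈ Set.univ.pi S := by
    intro k _
    rcases eq_or_ne k i with rfl | hk
    · simpa using hmem
    · simpa [Function.update_of_ne hk] using hβ k (Set.mem_univ k)
  have hdescent : lsqPrimal X y g β ≤ _ := hmin hupd
  have hconv : g i (β i + s * (t - β i)) ≤ (1 - s) * g i (β i) + s * g i t := by
    rw [show β i + s * (t - β i) = (1 - s) * β i + s * t by ring]
    simpa only [smul_eq_mul] using (hg i).2 hβi ht (by linarith : 0 ≤ 1 - s) hs0.le (by ring)
  rw [lsqPrimal_update] at hdescent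
  have key : s * (x * (t - β i) - (g i t - g i (β i)))
      ≤ s * (s * ((t - β i) ^ 2 / 2 * ∑ j, X j i ^ 2)) := by nlinarith
  linarith [le_of_mul_le_mul_left key hs0]

variable (X y)

theorem sInf_lsqPrimal_eq_sSup_lsqDual {g' : Fin p → ℝ → ℝ} (hS : ∀ i, IsCompact (S i))
    (hS₀ : ∀ i, (S i).Nonempty) (hconv : ∀ i, ConvexOn ℝ (S i) (g i))
    (hcont : ∀ i, ContinuousOn (g i) (S i))
    (hg' : ∀ i x, IsLUB ((fun t => x * t - g i t) '' S i) (g' i x)) :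
    sInf (lsqPrimal X y g '' Set.univ.pi S) = sSup (Set.range (lsqDual X y g')) := by
  obtain ⟨β, hβ, hmin⟩ := (isCompact_univ_pi hS).exists_isMinOn
    (Set.univ_pi_nonempty_iff.2 hS₀) (continuousOn_lsqPrimal hcont)
  set r : Fin n → ℝ := fun j => y j - ∑ k, X j k * β k
  have hfenchel : ∀ i, g' i (∑ j, X j i * r j) = (∑ j, X j i * r j) * β i - g i (β i) :=
    fun i => (hg' i _).unique <| IsGreatest.isLUB
      ⟨Set.mem_image_of_mem _ (hβ i (Set.mem_univ i)), by
        rintro _ ⟨t, ht, rfl⟩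
        exact mul_sub_le_of_isMinOn_lsqPrimal hconv hβ hmin i ht⟩
  have hgap : lsqPrimal X y g β = lsqDual X y g' r := by
    rw [← sub_eq_zero, lsqPrimal_sub_lsqDual]
    simp [r, hfenchel]
  have hleast : IsLeast (lsqPrimal X y g '' Set.univ.pi S) (lsqPrimal X y g β) :=
    ⟨Set.mem_image_of_mem _ hβ, by rintro _ ⟨γ, hγ, rfl⟩; exact hmin hγ⟩
  have hgreatest : IsGreatest (Set.range (lsqDual X y g')) (lsqPrimal X y g β) :=
    ⟨hgap ▸ Set.mem_range_self r, by
      rintro _ ⟨ρ, rfl⟩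
      exact lsqDual_le_lsqPrimal (fun i x => (hg' i x).1) hβ ρ⟩
  rw [hleast.csInf_eq, hgreatest.csSup_eq]

end SeparableLeastSquares

lemma isGreatest_hfun {lam0 lam2 M z : ℝ} (hlam2 : 0 < lam2) (hM : 0 ≤ M) (hz : 0 ≤ z) :
    IsGreatest ((fun u => z * u - (lam0 + lam2 * u ^ 2)) '' Set.Icc 0 M)
      (hfun lam0 lam2 M z) := by
  refine ⟨?_, ?_⟩
  · by_cases h : z ≤ 2 * M * lam2
    · refine ⟨z / (2 * lam2), ⟨by positivity, ?_⟩, ?_⟩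
      · rw [div_le_iff₀ (by positivity)]
        linarith
      · rw [hfun, if_pos h]
        field_simp
        ring
    · refine ⟨M, Set.right_mem_Icc.2 hM, ?_⟩
      rw [hfun, if_neg h]
      ring
  · rintro _ ⟨u, hu, rfl⟩
    unfold hfun
    split_ifs with h
    · have hsq : z ^ 2 / (4 * lam2)
          = z * u - lam2 * u ^ 2 + (z - 2 * lam2 * u) ^ 2 / (4 * lam2) := by
        field_simp
        ring
      have : 0 ≤ (z - 2 * lam2 * u) ^ 2 / (4 * lam2) := by positivity
      linarith
    · nlinarith [mul_nonneg (sub_nonneg.2 hu.2) (by nlinarith [hu.2] : 0 ≤ z - lam2 * (M + u))]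

lemma isGreatest_max_hfun {lam0 lam2 M z : ℝ} (hlam0 : 0 ≤ lam0) (hlam2 : 0 < lam2)
    (hτM : √(lam0 / lam2) ≤ M) (hz : 0 ≤ z) :
    IsGreatest ((fun u => z * u - (if |u| ≤ √(lam0 / lam2) then 2 * √(lam0 * lam2) * |u|
        else lam0 + lam2 * u ^ 2)) '' Set.Icc 0 M) (max (hfun lam0 lam2 M z) 0) := by
  set τ := √(lam0 / lam2)
  have hτ0 : 0 ≤ τ := Real.sqrt_nonneg _
  have hc : √(lam0 * lam2) = lam2 * τ := sqrt_mul_eq_mul_sqrt_div lam0 hlam2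
  have hτ2 : lam2 * τ ^ 2 = lam0 := mul_sqrt_div_sq hlam0 hlam2
  obtain ⟨⟨u, hu, hval⟩, hquad⟩ := isGreatest_hfun (lam0 := lam0) hlam2 (hτ0.trans hτM) hz
  have hub : max (hfun lam0 lam2 M z) 0 ∈ upperBounds ((fun u => z * u -
      (if |u| ≤ τ then 2 * √(lam0 * lam2) * |u| else lam0 + lam2 * u ^ 2)) '' Set.Icc 0 M) := by
    rintro _ ⟨v, hv, rfl⟩
    dsimp only
    split_ifs with hvτ
    -- `2 √(λ0 λ2) v` is the tangent to `λ0 + λ2 v²` through the origin, touching it at `v = τ`.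
    · have hτ : z * τ - (lam0 + lam2 * τ ^ 2) ≤ hfun lam0 lam2 M z :=
        hquad ⟨τ, ⟨hτ0, hτM⟩, rfl⟩
      rw [abs_of_nonneg hv.1] at hvτ ⊢
      calc z * v - 2 * √(lam0 * lam2) * v = v * (z - 2 * lam2 * τ) := by rw [hc]; ring
        _ ≤ max (τ * (z - 2 * lam2 * τ)) 0 := mul_le_max_mul_zero ⟨hv.1, hvτ⟩ _
        _ ≤ max (hfun lam0 lam2 M z) 0 := max_le_max (by linarith) le_rfl
    · exact le_max_of_le_left (hquad ⟨v, hv, rfl⟩)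
  rcases le_total (hfun lam0 lam2 M z) 0 with hneg | hpos
  · refine isGreatest_of_mem_of_le
      (Set.mem_image_of_mem _ (Set.left_mem_Icc.2 (hτ0.trans hτM))) hub ?_
    simp [hneg, hτ0]
  · refine isGreatest_of_mem_of_le (Set.mem_image_of_mem _ hu) hub ?_
    rw [max_eq_left hpos, ← hval]
    dsimp only
    split_ifs
    · rw [hc, ← sq_abs u]
      nlinarith [sq_nonneg (|u| - τ), hlam2.le]
    · exact le_rfl

section NodeRelaxation

variable {p : ℕ} {lam0 lam2 M : ℝ}

def feasCoord (M : ℝ) (F0 : Set (Fin p)) (i : Fin p) : Set ℝ :=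
  if i ∈ F0 then {0} else Set.Icc (-M) M

lemma feasC_eq_pi (hM : 0 ≤ M) (F0 : Set (Fin p)) :
    feasC M F0 = Set.univ.pi (feasCoord M F0) := by
  ext β
  simp only [feasC, Set.mem_ofPred_eq, Set.mem_univ_pi, ← forall_and]
  refine forall_congr' fun i => ?_
  by_cases hi : i ∈ F0
  · simp only [feasCoord, hi, if_true, Set.mem_singleton_iff, forall_const]
    exact ⟨fun h => h.2, fun h => ⟨by simp [h, hM], h⟩⟩
  · simp [feasCoord, hi, abs_le]

lemma isCompact_feasCoord (F0 : Set (Fin p)) (i : Fin p) : IsCompact (feasCoord M F0 i) := by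
  unfold feasCoord
  split_ifs
  exacts [isCompact_singleton, isCompact_Icc]

lemma convex_feasCoord (F0 : Set (Fin p)) (i : Fin p) : Convex ℝ (feasCoord M F0 i) := by
  unfold feasCoord
  split_ifs
  exacts [convex_singleton 0, convex_Icc _ _]

lemma feasCoord_nonempty (hM : 0 ≤ M) (F0 : Set (Fin p)) (i : Fin p) :
    (feasCoord M F0 i).Nonempty := by
  unfold feasCoord
  split_ifs
  exacts [Set.singleton_nonempty 0, Set.nonempty_Icc.2 (by linarith)]

lemma psi_neg (F0 F1 : Set (Fin p)) (i : Fin p) (t : ℝ) :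
    psi lam0 lam2 M F0 F1 i (-t) = psi lam0 lam2 M F0 F1 i t := by
  simp only [psi, abs_neg, neg_sq]

lemma psi_eq_add_mul_abs_add_mul_sq (hlam0 : 0 ≤ lam0) (hlam2 : 0 < lam2) (hM : 0 ≤ M)
    (F0 F1 : Set (Fin p)) (i : Fin p) : ∃ a b d τ : ℝ, 0 ≤ b ∧ 0 ≤ d ∧
      psi lam0 lam2 M F0 F1 i = fun t => a + b * |t| + d * max (|t| - τ) 0 ^ 2 := by
  by_cases hi0 : i ∈ F0
  · exact ⟨0, 0, 0, 0, le_rfl, le_rfl, by funext t; simp [psi, hi0]⟩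
  by_cases hi1 : i ∈ F1
  · exact ⟨lam0, 0, lam2, 0, le_rfl, hlam2.le, by funext t; simp [psi, hi0, hi1]⟩
  by_cases hτM : √(lam0 / lam2) ≤ M
  · refine ⟨0, 2 * √(lam0 * lam2), lam2, √(lam0 / lam2), by positivity, hlam2.le, ?_⟩
    funext t
    simp only [psi, hi0, hi1, hτM, if_false, if_true]
    split_ifs with ht
    · rw [max_eq_right (by linarith)]
      ring
    · rw [max_eq_left (by linarith), sqrt_mul_eq_mul_sqrt_div lam0 hlam2, ← sq_abs t]
      linear_combination -mul_sqrt_div_sq hlam0 hlam2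
  · exact ⟨0, lam0 / M + lam2 * M, 0, 0, by positivity, le_rfl,
      by funext t; simp [psi, hi0, hi1, hτM]⟩

lemma convexOn_add_mul_abs_add_mul_sq {a b d : ℝ} (hb : 0 ≤ b) (hd : 0 ≤ d) (τ : ℝ) :
    ConvexOn ℝ Set.univ fun t : ℝ => a + b * |t| + d * max (|t| - τ) 0 ^ 2 := by
  have habs : ConvexOn ℝ Set.univ fun t : ℝ => |t| :=
    convexOn_univ_norm.congr fun t _ => Real.norm_eq_abs t
  have hpos : ConvexOn ℝ Set.univ fun t : ℝ => max (|t| - τ) 0 :=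
    (habs.sub (concaveOn_const τ convex_univ)).sup (convexOn_const 0 convex_univ)
  exact ((convexOn_const a convex_univ).add (habs.smul hb)).add
    ((hpos.pow (fun _ _ => le_max_right _ _) 2).smul hd)

lemma convexOn_psi (hlam0 : 0 ≤ lam0) (hlam2 : 0 < lam2) (hM : 0 ≤ M)
    (F0 F1 : Set (Fin p)) (i : Fin p) : ConvexOn ℝ Set.univ (psi lam0 lam2 M F0 F1 i) := by
  obtain ⟨a, b, d, τ, hb, hd, h⟩ := psi_eq_add_mul_abs_add_mul_sq hlam0 hlam2 hM F0 F1 i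
  exact h ▸ convexOn_add_mul_abs_add_mul_sq hb hd τ

lemma continuous_psi (hlam0 : 0 ≤ lam0) (hlam2 : 0 < lam2) (hM : 0 ≤ M)
    (F0 F1 : Set (Fin p)) (i : Fin p) : Continuous (psi lam0 lam2 M F0 F1 i) := by
  obtain ⟨a, b, d, τ, -, -, h⟩ := psi_eq_add_mul_abs_add_mul_sq hlam0 hlam2 hM F0 F1 i
  rw [h]
  fun_prop

lemma isGreatest_nufun (hlam0 : 0 ≤ lam0) (hlam2 : 0 < lam2) (hM : 0 < M)
    (F0 F1 : Set (Fin p)) (i : Fin p) (x : ℝ) :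
    IsGreatest ((fun t => x * t - psi lam0 lam2 M F0 F1 i t) '' feasCoord M F0 i)
      (nufun lam0 lam2 M F0 F1 i |x|) := by
  by_cases hi0 : i ∈ F0
  · simp [feasCoord, psi, nufun, hi0]
  rw [feasCoord, if_neg hi0]
  refine isGreatest_image_Icc_of_even (psi_neg F0 F1 i) (fun z hz => ?_) x
  by_cases hi1 : i ∈ F1
  · simpa only [psi, nufun, hi0, hi1, if_false, if_true] using
      isGreatest_hfun (lam0 := lam0) hlam2 hM.le hz
  by_cases hτM : √(lam0 / lam2) ≤ M
  · simpa only [psi, nufun, hi0, hi1, hτM, if_false, if_true] using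
      isGreatest_max_hfun hlam0 hlam2 hτM hz
  · have hmax : M * (z - (lam0 / M + lam2 * M)) = M * z - lam0 - lam2 * M ^ 2 := by
      field_simp
      ring
    simpa only [psi, nufun, hi0, hi1, hτM, if_false, hmax] using
      isGreatest_mul_sub_mul_abs hM.le z (lam0 / M + lam2 * M)

lemma primalP_eq_lsqPrimal {n : ℕ} (X : Matrix (Fin n) (Fin p) ℝ) (y : Fin n → ℝ)
    (F0 F1 : Set (Fin p)) :
    primalP X y lam0 lam2 M F0 F1 = lsqPrimal X y (psi lam0 lam2 M F0 F1) :=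
  rfl

lemma dualD_eq_lsqDual {n : ℕ} (X : Matrix (Fin n) (Fin p) ℝ) (y : Fin n → ℝ)
    (F0 F1 : Set (Fin p)) :
    dualD X y lam0 lam2 M F0 F1 = lsqDual X y fun i x => nufun lam0 lam2 M F0 F1 i |x| :=
  rfl

end NodeRelaxation

theorem strong_duality_node_relaxation_general {n p : ℕ} (X : Matrix (Fin n) (Fin p) ℝ)
    (y : Fin n → ℝ) (lam0 lam2 M : ℝ) (hlam0 : 0 ≤ lam0) (hlam2 : 0 < lam2) (hM : 0 < M)
    (F0 F1 : Set (Fin p)) :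
    sInf (primalP X y lam0 lam2 M F0 F1 '' feasC M F0)
      = sSup (Set.range (dualD X y lam0 lam2 M F0 F1)) := by
  rw [primalP_eq_lsqPrimal, dualD_eq_lsqDual, feasC_eq_pi hM.le]
  exact sInf_lsqPrimal_eq_sSup_lsqDual X y (isCompact_feasCoord F0)
    (feasCoord_nonempty hM.le F0)
    (fun i => (convexOn_psi hlam0 hlam2 hM.le F0 F1 i).subset (Set.subset_univ _)
      (convex_feasCoord F0 i))
    (fun i => (continuous_psi hlam0 hlam2 hM.le F0 F1 i).continuousOn)
    (fun i x => (isGreatest_nufun hlam0 hlam2 hM F0 F1 i x).isLUB)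

/-- Strong duality for the node relaxation: the infimum of `P(β)` over the primal
feasible set `C` equals the supremum of `D(r)` over `r ∈ ℝⁿ`. -/
theorem strong_duality_node_relaxation {n p : ℕ} (X : Matrix (Fin n) (Fin p) ℝ)
    (y : Fin n → ℝ) (lam0 lam2 M : ℝ) (hlam0 : 0 ≤ lam0) (hlam2 : 0 < lam2) (hM : 0 < M)
    (F0 F1 : Set (Fin p)) (hdisj : Disjoint F0 F1) :
    sInf (primalP X y lam0 lam2 M F0 F1 '' feasC M F0)
      = sSup (Set.range (dualD X y lam0 lam2 M F0 F1)) :=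
  strong_duality_node_relaxation_general X y lam0 lam2 M hlam0 hlam2 hM F0 F1
end
end

section
/- Scalar conjugate computation for free coordinates when √(λ0/λ2) > M: for every c ∈ ℝ, the minimum of β ↦ (λ0/M + λ2M)|β| − cβ over β ∈ [−M, M] equals −max(M|c| − λ0 − λ2M², 0), and it is attained at one of the three points β ∈ {0, −M, M}. -/
/-- Scalar conjugate computation for free coordinates when `√(λ0/λ2) > M`: for every
`c ∈ ℝ`, the minimum of `β ↦ (λ0/M + λ2 M)|β| − c β` over `β ∈ [−M, M]` equals
`−max(M|c| − λ0 − λ2 M², 0)`, and it is attained at one of the three points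
`β ∈ {0, -M, M}`. -/
theorem conjugate_free_coordinate_large_sqrt (lam0 lam2 M : ℝ) (hlam0 : 0 ≤ lam0)
    (hlam2 : 0 < lam2) (hM : 0 < M) (hcond : M < Real.sqrt (lam0 / lam2)) (c : ℝ) :
    IsLeast ((fun β : ℝ => (lam0 / M + lam2 * M) * |β| - c * β) '' Set.Icc (-M) M)
      (-(max (M * |c| - lam0 - lam2 * M ^ 2) 0)) ∧
    ∃ β ∈ ({0, -M, M} : Set ℝ),
      (lam0 / M + lam2 * M) * |β| - c * β = -(max (M * |c| - lam0 - lam2 * M ^ 2) 0) := by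
  have hAM : (lam0 / M + lam2 * M) * M = lam0 + lam2 * M ^ 2 := by
    field_simp
  have hmem : ∃ β ∈ ({0, -M, M} : Set ℝ),
      (lam0 / M + lam2 * M) * |β| - c * β = -(max (M * |c| - lam0 - lam2 * M ^ 2) 0) := by
    by_cases h : M * |c| - lam0 - lam2 * M ^ 2 ≤ 0
    · exact ⟨0, by simp, by simp [max_eq_right h]⟩
    · push_neg at h
      have hmax : max (M * |c| - lam0 - lam2 * M ^ 2) 0 = M * |c| - lam0 - lam2 * M ^ 2 :=
        max_eq_left h.le
      rcases le_or_gt 0 c with hc | hc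
      · refine ⟨M, by simp, ?_⟩
        rw [abs_of_pos hM, hmax]
        have : |c| = c := abs_of_nonneg hc
        nlinarith [hAM]
      · refine ⟨-M, by simp, ?_⟩
        rw [abs_neg, abs_of_pos hM, hmax]
        have : |c| = -c := abs_of_neg hc
        nlinarith [hAM]
  refine ⟨⟨?_, ?_⟩, hmem⟩
  · obtain ⟨β, hβ, hval⟩ := hmem
    refine ⟨β, ?_, hval⟩
    simp only [Set.mem_insert_iff, Set.mem_singleton_iff] at hβ
    rcases hβ with rfl | rfl | rfl <;> constructor <;> linarith
  · rintro x ⟨β, hβ, rfl⟩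
    simp only [Set.mem_Icc] at hβ
    have habs : |β| ≤ M := abs_le.mpr hβ
    have habs0 : 0 ≤ |β| := abs_nonneg β
    have hcb : -(c * β) ≥ -(|c| * |β|) := by
      have := abs_mul c β ▸ le_abs_self (c * β)
      linarith
    have key : (lam0 / M + lam2 * M) * |β| - c * β ≥ (lam0 / M + lam2 * M - |c|) * |β| := by
      nlinarith
    rcases le_or_gt (|c|) (lam0 / M + lam2 * M) with hcase | hcase
    · have h1 : 0 ≤ (lam0 / M + lam2 * M - |c|) * |β| := mul_nonneg (by linarith) habs0
      have h2 : -(max (M * |c| - lam0 - lam2 * M ^ 2) 0) ≤ 0 := by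
        simp [le_max_right]
      linarith
    · have h1 : (lam0 / M + lam2 * M - |c|) * M ≤ (lam0 / M + lam2 * M - |c|) * |β| := by
        nlinarith
      have h2 : M * |c| - lam0 - lam2 * M ^ 2 ≤ max (M * |c| - lam0 - lam2 * M ^ 2) 0 :=
        le_max_left _ _
      nlinarith [hAM]
end

section
/- Per-coordinate perspective relaxation identity: let λ0 > 0, λ2 > 0, M > 0 and β ∈ ℝ with |β| ≤ M. Then the infimum of λ0 z + λ2 s over all (z, s) with z ∈ [0, 1], s ≥ 0, β² ≤ s·z, and |β| ≤ M·z, equals ψ(β), where ψ(β) = λ0 + λ2β² if √(λ2/λ0)|β| ≥ 1; ψ(β) = 2√(λ0λ2)|β| if |β|/M ≤ √(λ2/λ0)|β| ≤ 1; and ψ(β) = (λ0/M + λ2M)|β| if √(λ0/λ2) > M. -/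
/-!
Writing `h(z) = λ0 z + λ2 β² / z` for the perspective of `λ2 β²`, the constraint `β² ≤ s z` shows
that replacing `s` by `β² / z` never increases the objective, so the problem reduces to
minimising the convex function `h` over `z ∈ [|β| / M, 1]`. Its unconstrained minimiser is
`z* = √(λ2/λ0) |β|` with value `2 √(λ0 λ2) |β|` (AM-GM), and the three cases of the formula are
`z*` clamped to the right end `1`, lying inside the interval, or clamped to the left end `|β| / M`.
-/

open Set Real

lemma two_mul_sqrt_mul_le_add {x y : ℝ} (hx : 0 ≤ x) (hy : 0 ≤ y) : 2 * √(x * y) ≤ x + y := by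
  nlinarith [sq_sqrt (mul_nonneg hx hy), sqrt_nonneg (x * y), sq_nonneg (x - y)]

lemma mul_sqrt_div_self {a b : ℝ} (ha : 0 < a) : a * √(b / a) = √(a * b) := by
  rw [← sqrt_sq ha.le, ← sqrt_mul (sq_nonneg a), sqrt_sq ha.le]
  congr 1
  field_simp

section Perspective

variable {p k c : ℝ}

lemma antitoneOn_mul_add_div (hp : 0 ≤ p) (hk : p * c ^ 2 ≤ k) :
    AntitoneOn (fun z => p * z + k / z) (Ioc 0 c) := by
  rintro x ⟨hx0, hxc⟩ y ⟨hy0, hyc⟩ hxy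
  have hxy_sq : p * (x * y) ≤ k := by
    nlinarith [mul_le_mul hxc hyc hy0.le (hx0.le.trans hxc), mul_nonneg hp hx0.le]
  have : p * (y - x) ≤ k * (y - x) / (x * y) := by
    rw [le_div_iff₀ (mul_pos hx0 hy0)]
    nlinarith [sub_nonneg.2 hxy]
  have hdiff : k / x - k / y = k * (y - x) / (x * y) := by field_simp
  simp only
  linarith

lemma monotoneOn_mul_add_div (hp : 0 ≤ p) (hc : 0 < c) (hk : k ≤ p * c ^ 2) :
    MonotoneOn (fun z => p * z + k / z) (Ici c) := by
  rintro x hx y hy hxy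
  have hx0 : 0 < x := hc.trans_le hx
  have hy0 : 0 < y := hx0.trans_le hxy
  have hxy_sq : k ≤ p * (x * y) := by
    nlinarith [mul_le_mul (mem_Ici.1 hx) (mem_Ici.1 hy) hc.le hx0.le, mul_nonneg hp hx0.le]
  have : k * (y - x) / (x * y) ≤ p * (y - x) := by
    rw [div_le_iff₀ (mul_pos hx0 hy0)]
    nlinarith [sub_nonneg.2 hxy]
  have hdiff : k / x - k / y = k * (y - x) / (x * y) := by field_simp
  simp only
  linarith

end Perspective

def perspectiveFeasible (M β : ℝ) : Set (ℝ × ℝ) :=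
  {q | q.1 ∈ Icc (0 : ℝ) 1 ∧ 0 ≤ q.2 ∧ β ^ 2 ≤ q.2 * q.1 ∧ |β| ≤ M * q.1}

def perspectiveObjective (lam0 lam2 : ℝ) (q : ℝ × ℝ) : ℝ :=
  lam0 * q.1 + lam2 * q.2

section Feasible

variable {lam0 lam2 M β : ℝ}

lemma mk_sq_div_mem_perspectiveFeasible {z : ℝ} (hz : z ∈ Icc (0 : ℝ) 1) (hβ : |β| ≤ M * z) :
    (z, β ^ 2 / z) ∈ perspectiveFeasible M β := by
  refine ⟨hz, div_nonneg (sq_nonneg β) hz.1, ?_, hβ⟩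
  rcases hz.1.eq_or_lt with rfl | hz0
  · simp_all
  · rw [div_mul_cancel₀ _ hz0.ne']

lemma pos_of_mem_perspectiveFeasible {q : ℝ × ℝ} (hq : q ∈ perspectiveFeasible M β)
    (hβ : β ≠ 0) : 0 < q.1 := by
  refine hq.1.1.lt_of_ne fun hz => hβ ?_
  have := hq.2.2.1
  rw [← hz, mul_zero] at this
  exact pow_eq_zero_iff two_ne_zero |>.1 (le_antisymm this (sq_nonneg β))

lemma perspectiveObjective_sq_div_le {q : ℝ × ℝ} (hlam2 : 0 ≤ lam2)
    (hq : q ∈ perspectiveFeasible M β) (hz : 0 < q.1) :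
    perspectiveObjective lam0 lam2 (q.1, β ^ 2 / q.1) ≤ perspectiveObjective lam0 lam2 q := by
  unfold perspectiveObjective
  gcongr
  exact (div_le_iff₀ hz).2 hq.2.2.1

lemma two_mul_sqrt_mul_abs_le_perspectiveObjective {q : ℝ × ℝ} (hlam0 : 0 ≤ lam0)
    (hlam2 : 0 ≤ lam2) (hq : q ∈ perspectiveFeasible M β) :
    2 * √(lam0 * lam2) * |β| ≤ perspectiveObjective lam0 lam2 q :=
  calc 2 * √(lam0 * lam2) * |β| = 2 * √(lam0 * lam2 * β ^ 2) := by
        rw [sqrt_mul (mul_nonneg hlam0 hlam2), sqrt_sq_eq_abs, mul_assoc]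
    _ ≤ 2 * √((lam0 * q.1) * (lam2 * q.2)) := by
        have : lam0 * lam2 * β ^ 2 ≤ (lam0 * q.1) * (lam2 * q.2) := by
          nlinarith [mul_le_mul_of_nonneg_left hq.2.2.1 (mul_nonneg hlam0 hlam2)]
        gcongr
    _ ≤ perspectiveObjective lam0 lam2 q :=
        two_mul_sqrt_mul_le_add (mul_nonneg hlam0 hq.1.1) (mul_nonneg hlam2 hq.2.1)

end Feasible

section Cases

variable {lam0 lam2 M β : ℝ}

lemma isLeast_perspectiveObjective_of_one_le (hlam0 : 0 < lam0) (hlam2 : 0 ≤ lam2)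
    (hβM : |β| ≤ M) (h : 1 ≤ √(lam2 / lam0) * |β|) :
    IsLeast (perspectiveObjective lam0 lam2 '' perspectiveFeasible M β)
      (lam0 + lam2 * β ^ 2) := by
  have hk : lam0 * 1 ^ 2 ≤ lam2 * β ^ 2 := by
    have h2 := pow_le_pow_left₀ zero_le_one h 2
    rw [one_pow, mul_pow, sq_sqrt (div_nonneg hlam2 hlam0.le), sq_abs, div_mul_eq_mul_div,
      one_le_div hlam0] at h2
    simpa using h2
  have hβ : β ≠ 0 := by
    rintro rfl
    simp only [abs_zero, mul_zero] at h
    exact absurd h zero_lt_one.not_ge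
  refine ⟨⟨(1, β ^ 2 / 1), mk_sq_div_mem_perspectiveFeasible ⟨zero_le_one, le_rfl⟩
    (by rwa [mul_one]), by simp [perspectiveObjective]⟩, ?_⟩
  rintro _ ⟨q, hq, rfl⟩
  have hz := pos_of_mem_perspectiveFeasible hq hβ
  calc lam0 + lam2 * β ^ 2 = lam0 * 1 + lam2 * β ^ 2 / 1 := by simp
    _ ≤ lam0 * q.1 + lam2 * β ^ 2 / q.1 :=
        antitoneOn_mul_add_div hlam0.le hk ⟨hz, hq.1.2⟩ ⟨one_pos, le_rfl⟩ hq.1.2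
    _ = perspectiveObjective lam0 lam2 (q.1, β ^ 2 / q.1) := by
        rw [perspectiveObjective, mul_div_assoc]
    _ ≤ perspectiveObjective lam0 lam2 q := perspectiveObjective_sq_div_le hlam2 hq hz

lemma isLeast_perspectiveObjective_of_lt_one_of_div_le (hlam0 : 0 < lam0) (hlam2 : 0 < lam2)
    (hM : 0 < M) (h1 : √(lam2 / lam0) * |β| < 1) (h2 : |β| / M ≤ √(lam2 / lam0) * |β|) :
    IsLeast (perspectiveObjective lam0 lam2 '' perspectiveFeasible M β)
      (2 * √(lam0 * lam2) * |β|) := by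
  set r := √(lam2 / lam0) with hr
  have hval : perspectiveObjective lam0 lam2 (r * |β|, β ^ 2 / (r * |β|)) =
      2 * √(lam0 * lam2) * |β| := by
    rcases eq_or_ne β 0 with rfl | hβ
    · simp [perspectiveObjective]
    have hr0 : 0 < r := sqrt_pos.2 (div_pos hlam2 hlam0)
    have hr2 : r ^ 2 = lam2 / lam0 := sq_sqrt (div_pos hlam2 hlam0).le
    rw [← mul_sqrt_div_self hlam0, ← hr, perspectiveObjective, ← sq_abs]
    field_simp
    rw [hr2]
    field_simp
    ring
  refine ⟨⟨_, mk_sq_div_mem_perspectiveFeasible ⟨by positivity, h1.le⟩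
    ((div_le_iff₀' hM).1 h2), hval⟩, ?_⟩
  rintro _ ⟨q, hq, rfl⟩
  exact two_mul_sqrt_mul_abs_le_perspectiveObjective hlam0.le hlam2.le hq

lemma isLeast_perspectiveObjective_of_lt_div (hlam0 : 0 < lam0) (hlam2 : 0 ≤ lam2) (hM : 0 < M)
    (hβM : |β| ≤ M) (h : √(lam2 / lam0) * |β| < |β| / M) :
    IsLeast (perspectiveObjective lam0 lam2 '' perspectiveFeasible M β)
      ((lam0 / M + lam2 * M) * |β|) := by
  have hβ0 : 0 < |β| := (abs_nonneg β).lt_of_ne fun h0 => by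
    rw [← h0] at h
    simp at h
  have hc : 0 < |β| / M := div_pos hβ0 hM
  have hk : lam2 * β ^ 2 ≤ lam0 * (|β| / M) ^ 2 := by
    have h2 := pow_le_pow_left₀ (by positivity) h.le 2
    rw [mul_pow, sq_sqrt (div_nonneg hlam2 hlam0.le), sq_abs, div_mul_eq_mul_div,
      div_le_iff₀ hlam0] at h2
    linarith
  have hval : perspectiveObjective lam0 lam2 (|β| / M, β ^ 2 / (|β| / M)) =
      (lam0 / M + lam2 * M) * |β| := by
    rw [perspectiveObjective, ← sq_abs]
    field_simp
  refine ⟨⟨_, mk_sq_div_mem_perspectiveFeasible ⟨hc.le, (div_le_one hM).2 hβM⟩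
    (mul_div_cancel₀ _ hM.ne').ge, hval⟩, ?_⟩
  rintro _ ⟨q, hq, rfl⟩
  have hcz : |β| / M ≤ q.1 := (div_le_iff₀' hM).2 hq.2.2.2
  have hz := hc.trans_le hcz
  calc (lam0 / M + lam2 * M) * |β|
      = lam0 * (|β| / M) + lam2 * β ^ 2 / (|β| / M) := by
        rw [← hval, perspectiveObjective, mul_div_assoc]
    _ ≤ lam0 * q.1 + lam2 * β ^ 2 / q.1 :=
        monotoneOn_mul_add_div hlam0.le hc hk (mem_Ici.2 le_rfl) (mem_Ici.2 hcz) hcz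
    _ = perspectiveObjective lam0 lam2 (q.1, β ^ 2 / q.1) := by
        rw [perspectiveObjective, mul_div_assoc]
    _ ≤ perspectiveObjective lam0 lam2 q := perspectiveObjective_sq_div_le hlam2 hq hz

end Cases

/-- Per-coordinate perspective relaxation identity: for `|β| ≤ M`, the infimum of
`λ0 z + λ2 s` over all `(z, s)` with `z ∈ [0,1]`, `s ≥ 0`, `β² ≤ s·z`, `|β| ≤ M·z`,
equals `ψ(β)`, where `ψ(β) = λ0 + λ2 β²` if `√(λ2/λ0)|β| ≥ 1`;
`ψ(β) = 2√(λ0λ2)|β|` if `|β|/M ≤ √(λ2/λ0)|β| ≤ 1`; and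
`ψ(β) = (λ0/M + λ2 M)|β|` if `√(λ0/λ2) > M`. -/
theorem perspective_relaxation_identity (lam0 lam2 M β : ℝ) (hlam0 : 0 < lam0)
    (hlam2 : 0 < lam2) (hM : 0 < M) (hβM : |β| ≤ M) :
    IsLeast ((fun q : ℝ × ℝ => lam0 * q.1 + lam2 * q.2) ''
        {q : ℝ × ℝ | q.1 ∈ Set.Icc (0 : ℝ) 1 ∧ 0 ≤ q.2 ∧ β ^ 2 ≤ q.2 * q.1 ∧
          |β| ≤ M * q.1})
      (if 1 ≤ Real.sqrt (lam2 / lam0) * |β| then lam0 + lam2 * β ^ 2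
       else if |β| / M ≤ Real.sqrt (lam2 / lam0) * |β| then
         2 * Real.sqrt (lam0 * lam2) * |β|
       else (lam0 / M + lam2 * M) * |β|) := by
  split_ifs with h1 h2
  · exact isLeast_perspectiveObjective_of_one_le hlam0 hlam2.le hβM h1
  · exact isLeast_perspectiveObjective_of_lt_one_of_div_le hlam0 hlam2 hM (not_le.1 h1) h2
  · exact isLeast_perspectiveObjective_of_lt_div hlam0 hlam2.le hM hβM (not_le.1 h2)
end

section
/- The box-constrained soft-thresholding operator solves the box-constrained ℓ1 proximal problem: for every a ≥ 0, m > 0, and t ∈ ℝ, the unique minimizer of x ↦ a|x| + (1/2)(x − t)² over x ∈ [−m, m] is T(t; a, m). -/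
noncomputable def softT (t a m : ℝ) : ℝ :=
  if |t| ≤ a then 0
  else if |t| ≤ a + m then (|t| - a) * Real.sign t
  else m * Real.sign t

lemma aux_min (a m t T : ℝ) (ha : 0 ≤ a) (hTm : |T| ≤ m)
    (hkey : ∀ x ∈ Set.Icc (-m) m, a * |T| ≤ a * |x| + (T - t) * (x - T)) :
    T ∈ Set.Icc (-m) m ∧
    ∀ x ∈ Set.Icc (-m) m, x ≠ T →
      a * |T| + (1 / 2) * (T - t) ^ 2 < a * |x| + (1 / 2) * (x - t) ^ 2 := by
  refine ⟨⟨neg_le_of_abs_le hTm, le_of_abs_le hTm⟩, ?_⟩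
  intro x hx hne
  have h := hkey x hx
  have hne' : x - T ≠ 0 := sub_ne_zero.mpr hne
  have hsq : 0 < (x - T) ^ 2 := by positivity
  nlinarith [h, hsq]

/-- The box-constrained soft-thresholding operator solves the box-constrained ℓ1
proximal problem: for `a ≥ 0`, `m > 0`, `t ∈ ℝ`, the unique minimizer of
`x ↦ a|x| + (1/2)(x − t)²` over `x ∈ [−m, m]` is `T(t; a, m)`. -/
theorem softT_unique_minimizer (a m t : ℝ) (ha : 0 ≤ a) (hm : 0 < m) :
    softT t a m ∈ Set.Icc (-m) m ∧
    ∀ x ∈ Set.Icc (-m) m, x ≠ softT t a m →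
      a * |softT t a m| + (1 / 2) * (softT t a m - t) ^ 2
        < a * |x| + (1 / 2) * (x - t) ^ 2 := by
  rcases lt_trichotomy t 0 with ht | ht | ht
  · have hs : Real.sign t = -1 := Real.sign_of_neg ht
    have habs : |t| = -t := abs_of_neg ht
    unfold softT
    rw [hs, habs]
    split_ifs with h1 h2
    · apply aux_min _ _ _ _ ha
      · simpa using hm.le
      · rintro x ⟨hx1, hx2⟩
        rw [abs_zero]
        rcases abs_cases x with ⟨h, _⟩ | ⟨h, _⟩ <;> rw [h] <;> nlinarith
    · have hA : |(-t - a) * (-1:ℝ)| = -t - a := by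
        rw [abs_of_nonpos (by nlinarith)]; ring
      apply aux_min _ _ _ _ ha
      · rw [hA]; nlinarith
      · rintro x ⟨hx1, hx2⟩
        rw [hA]
        rcases abs_cases x with ⟨h, _⟩ | ⟨h, _⟩ <;> rw [h] <;> nlinarith
    · have hA : |m * (-1:ℝ)| = m := by
        rw [abs_of_nonpos (by nlinarith)]; ring
      apply aux_min _ _ _ _ ha
      · rw [hA]
      · rintro x ⟨hx1, hx2⟩
        rw [hA]
        rcases abs_cases x with ⟨h, _⟩ | ⟨h, _⟩ <;> rw [h] <;>
          nlinarith [mul_nonneg (by linarith : (0:ℝ) ≤ -t - a - m)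
            (by linarith : (0:ℝ) ≤ x + m)]
  · subst ht
    unfold softT
    rw [if_pos (by simpa using ha)]
    apply aux_min _ _ _ _ ha
    · simpa using hm.le
    · rintro x ⟨hx1, hx2⟩
      rw [abs_zero]
      rcases abs_cases x with ⟨h, _⟩ | ⟨h, _⟩ <;> rw [h] <;> nlinarith
  · have hs : Real.sign t = 1 := Real.sign_of_pos ht
    have habs : |t| = t := abs_of_pos ht
    unfold softT
    rw [hs, habs]
    split_ifs with h1 h2
    · apply aux_min _ _ _ _ ha
      · simpa using hm.le
      · rintro x ⟨hx1, hx2⟩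
        rw [abs_zero]
        rcases abs_cases x with ⟨h, _⟩ | ⟨h, _⟩ <;> rw [h] <;> nlinarith
    · have hA : |(t - a) * (1:ℝ)| = t - a := by
        rw [abs_of_nonneg (by nlinarith)]; ring
      apply aux_min _ _ _ _ ha
      · rw [hA]; nlinarith
      · rintro x ⟨hx1, hx2⟩
        rw [hA]
        rcases abs_cases x with ⟨h, _⟩ | ⟨h, _⟩ <;> rw [h] <;> nlinarith
    · have hA : |m * (1:ℝ)| = m := by
        rw [abs_of_nonneg (by nlinarith)]; ring
      apply aux_min _ _ _ _ ha
      · rw [hA]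
      · rintro x ⟨hx1, hx2⟩
        rw [hA]
        rcases abs_cases x with ⟨h, _⟩ | ⟨h, _⟩ <;> rw [h] <;>
          nlinarith [mul_nonneg (by linarith : (0:ℝ) ≤ t - a - m)
            (by linarith : (0:ℝ) ≤ m - x)]
end

section
/- Closed form of the ADMM β-update for free coordinates in the big-M regime: let λ0 ≥ 0, λ2 > 0, M > 0, ρ > 0 with √(λ0/λ2) > M, and let t ∈ ℝ. Then the unique minimizer of β ↦ (ρ/2)(β − t)² + (λ0/M + λ2M)|β| over β ∈ [−M, M] is β* = T(t; λ0/(Mρ) + λ2M/ρ, M). -/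
/-!
With `a = λ0/(Mρ) + λ2 M/ρ` the objective is `ρ (½ (β - t)² + a |β|)`. The point `x = T(t; a, M)`
satisfies the variational inequality `0 ≤ (x - t)(β - x) + a (|β| - |x|)` on `[-M, M]`, checked
case by case for `t ≥ 0` and transported to `t < 0` by the oddness of `T`. Expanding the square,
the objective at `β` exceeds the one at `x` by `ρ/2 (β - x)²` plus `ρ` times that nonnegative
quantity, which is strictly positive for `β ≠ x`.
-/

open Set

theorem softT_neg (t a m : ℝ) : softT (-t) a m = -softT t a m := by
  simp only [softT, abs_neg, Real.sign_neg]
  split_ifs <;> ring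

section

variable {t a m : ℝ}

theorem softT_of_nonneg (ha : 0 ≤ a) (ht : 0 ≤ t) :
    softT t a m = if t ≤ a then 0 else if t ≤ a + m then t - a else m := by
  rcases ht.eq_or_lt with rfl | ht
  · simp [softT, ha]
  · simp [softT, abs_of_pos ht, Real.sign_of_pos ht]

theorem abs_softT_le (ha : 0 ≤ a) (hm : 0 ≤ m) : |softT t a m| ≤ m := by
  wlog ht : 0 ≤ t generalizing t
  · simpa [softT_neg] using this (t := -t) (by linarith)
  rw [softT_of_nonneg ha ht]
  split_ifs with h₁ h₂
  · simpa
  · rw [abs_of_pos (by linarith)]; linarith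
  · exact (abs_of_nonneg hm).le

theorem softT_variational_ineq (ha : 0 ≤ a) {β : ℝ} (hβ : β ∈ Icc (-m) m) :
    0 ≤ (softT t a m - t) * (β - softT t a m) + a * (|β| - |softT t a m|) := by
  wlog ht : 0 ≤ t generalizing t β
  · have := this (t := -t) (β := -β) ⟨by linarith [hβ.2], by linarith [hβ.1]⟩ (by linarith)
    rw [softT_neg, abs_neg, abs_neg] at this
    linarith
  have hβ_le := le_abs_self β
  rw [softT_of_nonneg ha ht]
  split_ifs with h₁ h₂
  · simp only [abs_zero, sub_zero, zero_sub]
    nlinarith [abs_nonneg β]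
  · rw [abs_of_pos (show 0 < t - a by linarith)]
    nlinarith
  · rw [abs_of_nonneg (show 0 ≤ m by linarith [hβ.1, hβ.2])]
    nlinarith [hβ.2]

theorem objective_softT_lt {ρ β : ℝ} (hρ : 0 < ρ) (ha : 0 ≤ a) (hβ : β ∈ Icc (-m) m)
    (hne : β ≠ softT t a m) :
    ρ / 2 * (softT t a m - t) ^ 2 + ρ * a * |softT t a m|
      < ρ / 2 * (β - t) ^ 2 + ρ * a * |β| := by
  have hvi := softT_variational_ineq (t := t) ha hβ
  have hsq : 0 < (β - softT t a m) ^ 2 := sq_pos_of_ne_zero (sub_ne_zero.mpr hne)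
  nlinarith [mul_pos hρ hsq, mul_nonneg hρ.le hvi]

end

theorem admm_beta_update_free_bigM_general (lam0 lam2 M ρ t : ℝ) (hlam0 : 0 ≤ lam0)
    (hlam2 : 0 < lam2) (hM : 0 < M) (hρ : 0 < ρ) :
    softT t (lam0 / (M * ρ) + lam2 * M / ρ) M ∈ Set.Icc (-M) M ∧
    ∀ β ∈ Set.Icc (-M) M, β ≠ softT t (lam0 / (M * ρ) + lam2 * M / ρ) M →
      (ρ / 2) * (softT t (lam0 / (M * ρ) + lam2 * M / ρ) M - t) ^ 2
          + (lam0 / M + lam2 * M) * |softT t (lam0 / (M * ρ) + lam2 * M / ρ) M|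
        < (ρ / 2) * (β - t) ^ 2 + (lam0 / M + lam2 * M) * |β| := by
  have hweight : lam0 / M + lam2 * M = ρ * (lam0 / (M * ρ) + lam2 * M / ρ) := by
    field_simp
  have ha : 0 ≤ lam0 / (M * ρ) + lam2 * M / ρ := by positivity
  rw [hweight]
  exact ⟨abs_le.mp (abs_softT_le ha hM.le), fun β hβ hne => objective_softT_lt hρ ha hβ hne⟩

/-- Closed form of the ADMM `β`-update for free coordinates in the big-M regime: if
`√(λ0/λ2) > M`, then the unique minimizer of
`β ↦ (ρ/2)(β − t)² + (λ0/M + λ2 M)|β|` over `β ∈ [−M, M]` is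
`β* = T(t; λ0/(Mρ) + λ2 M/ρ, M)`. -/
theorem admm_beta_update_free_bigM (lam0 lam2 M ρ t : ℝ) (hlam0 : 0 ≤ lam0)
    (hlam2 : 0 < lam2) (hM : 0 < M) (hρ : 0 < ρ)
    (hMcond : M < Real.sqrt (lam0 / lam2)) :
    softT t (lam0 / (M * ρ) + lam2 * M / ρ) M ∈ Set.Icc (-M) M ∧
    ∀ β ∈ Set.Icc (-M) M, β ≠ softT t (lam0 / (M * ρ) + lam2 * M / ρ) M →
      (ρ / 2) * (softT t (lam0 / (M * ρ) + lam2 * M / ρ) M - t) ^ 2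
          + (lam0 / M + lam2 * M) * |softT t (lam0 / (M * ρ) + lam2 * M / ρ) M|
        < (ρ / 2) * (β - t) ^ 2 + (lam0 / M + lam2 * M) * |β| :=
  admm_beta_update_free_bigM_general lam0 lam2 M ρ t hlam0 hlam2 hM hρ
end
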